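/- arXiv:1409.2070 — 2 statements merged into one kernel-verified Lean document; each statement's English description precedes it below -/
import Mathlib

section
/- Fix 0 < α < 1 and set a_k = ∏_{i=1}^{k} (1 − (i+1)^{−α}) for k ≥ 1. Then the compact set E = {0, 1, a_1, a_2, …} ⊂ ℝ is quasi uniformly disconnected. -/
open Filter Topology Metric Set

/-- A set `E ⊆ ℝ` is quasi uniformly disconnected: there is `ψ : ℝ⁺ → ℝ⁺` with `ψ r < r`
and `log ψ(r) / log r → 1` as `r → 0⁺`, and `r* > 0`, such that for every `x ∈ E` and
`0 < r < r*` there is `E ∩ B(x, ψ r) ⊆ F ⊆ B(x, r)` with `dist(F, E \ F) ≥ ψ r`. -/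
def QuasiUniformlyDisconnectedSet (E : Set ℝ) : Prop :=
  ∃ ψ : ℝ → ℝ, (∀ r : ℝ, 0 < r → 0 < ψ r ∧ ψ r < r) ∧
    Filter.Tendsto (fun r => Real.log (ψ r) / Real.log r) (𝓝[>] (0 : ℝ)) (𝓝 1) ∧
    ∃ rstar : ℝ, 0 < rstar ∧ ∀ x ∈ E, ∀ r : ℝ, 0 < r → r < rstar →
      ∃ F : Set ℝ, F ⊆ E ∧ E ∩ Metric.closedBall x (ψ r) ⊆ F ∧
        F ⊆ Metric.closedBall x r ∧ ∀ y ∈ F, ∀ z ∈ E \ F, ψ r ≤ dist y z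

/-- `a_k = ∏_{i=1}^k (1 - (i+1)^(-α))`; note `a_0 = 1` (empty product). -/
noncomputable def aSeq (α : ℝ) (k : ℕ) : ℝ :=
  ∏ i ∈ Finset.Icc 1 k, (1 - ((i : ℝ) + 1) ^ (-α))

/-- The countable compact set `E = {0, 1, a_1, a_2, …}`. -/
noncomputable def aSet (α : ℝ) : Set ℝ :=
  insert (0 : ℝ) (insert 1 {x : ℝ | ∃ k : ℕ, 1 ≤ k ∧ x = aSeq α k})

/-!
For a strictly decreasing null sequence `a` whose gaps `a n - a (n + 1)` also strictly decrease,
the set `E = {0} ∪ {a n}` splits, at every scale `r < a 0`, along the gap below the first index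
`N` with `a N ≤ r`: around `a k` with `k < N` the singleton is isolated by the larger gaps
above `a N`, and `E ∩ [0, a N]` is isolated by the gap `a (N - 1) - a N`. Taking
`ψ r = a N - a (N + 1)`, it remains to compare `log ψ r` with `log r`. For the product `a_k`
we have `ψ r ≥ r (1 - 2^(-α)) (N + 2)^(-α)` while `-log r ≥ (N + 2)^(1 - α) / 4`, so
`log ψ r / log r = 1 + O(log N / N^(1 - α)) → 1` because `α < 1`.
-/

open Real

section Sequence

variable {a : ℕ → ℝ} {r : ℝ}

noncomputable def firstLE (a : ℕ → ℝ) (r : ℝ) : ℕ := sInf {n | a n ≤ r}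

noncomputable def firstLEGap (a : ℕ → ℝ) (r : ℝ) : ℝ := a (firstLE a r) - a (firstLE a r + 1)

lemma apply_firstLE_le (h : ∃ n, a n ≤ r) : a (firstLE a r) ≤ r := Nat.sInf_mem h

lemma lt_apply_of_lt_firstLE {j : ℕ} (hj : j < firstLE a r) : r < a j :=
  not_le.1 (Nat.notMem_of_lt_sInf hj)

lemma lt_firstLE_of_lt_apply (ha : Antitone a) (h : ∃ n, a n ≤ r) {j : ℕ} (hj : r < a j) :
    j < firstLE a r :=
  lt_of_not_ge fun hle => ((ha hle).trans (apply_firstLE_le h)).not_gt hj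

lemma exists_apply_le_of_tendsto (hlim : Tendsto a atTop (𝓝 0)) (hr : 0 < r) : ∃ n, a n ≤ r :=
  (hlim.eventually (ge_mem_nhds hr)).exists

lemma StrictAnti.pos_of_tendsto_zero (ha : StrictAnti a) (hlim : Tendsto a atTop (𝓝 0))
    (n : ℕ) : 0 < a n :=
  (ha.antitone.le_of_tendsto hlim (n + 1)).trans_lt (ha n.lt_succ_self)

lemma tendsto_firstLE (ha : StrictAnti a) (hlim : Tendsto a atTop (𝓝 0)) :
    Tendsto (firstLE a) (𝓝[>] 0) atTop := by
  refine tendsto_atTop.2 fun M => ?_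
  filter_upwards [Ioo_mem_nhdsGT (ha.pos_of_tendsto_zero hlim M)] with r hr
  exact (lt_firstLE_of_lt_apply ha.antitone (exists_apply_le_of_tendsto hlim hr.1) hr.2).le

lemma firstLEGap_pos (ha : StrictAnti a) : 0 < firstLEGap a r :=
  sub_pos.2 (ha (Nat.lt_succ_self _))

lemma firstLEGap_lt (ha : StrictAnti a) (hlim : Tendsto a atTop (𝓝 0)) (hr : 0 < r) :
    firstLEGap a r < r :=
  (sub_lt_self _ (ha.pos_of_tendsto_zero hlim _)).trans_le
    (apply_firstLE_le (exists_apply_le_of_tendsto hlim hr))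

lemma le_of_apply_succ_lt (ha : StrictAnti a) (h0 : ∀ n, 0 ≤ a n) {z : ℝ}
    (hz : z ∈ insert 0 (range a)) {n : ℕ} (hlt : a (n + 1) < z) : a n ≤ z := by
  rcases hz with rfl | ⟨j, rfl⟩
  · exact absurd hlt (h0 _).not_gt
  · exact ha.antitone (Nat.lt_succ_iff.1 (ha.lt_iff_gt.1 hlt))

lemma sub_succ_lt_abs_sub (ha : StrictAnti a) (h0 : ∀ n, 0 ≤ a n)
    (hgap : StrictAnti fun n => a n - a (n + 1)) {k N : ℕ} (hkN : k < N) {z : ℝ}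
    (hz : z ∈ insert 0 (range a)) (hne : z ≠ a k) : a N - a (N + 1) < |z - a k| := by
  have hk := hgap hkN
  rcases hz with rfl | ⟨j, rfl⟩
  · rw [zero_sub, abs_neg, abs_of_pos ((h0 _).trans_lt (ha k.lt_succ_self))]
    linarith [h0 (k + 1)]
  rcases lt_or_gt_of_ne (fun h : j = k => hne (h ▸ rfl)) with hjk | hkj
  · have := ha.antitone (Nat.succ_le_of_lt hjk)
    rw [abs_of_pos (sub_pos.2 (ha hjk))]
    linarith [hgap (hjk.trans hkN)]
  · have := ha.antitone (Nat.succ_le_of_lt hkj)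
    rw [abs_of_neg (sub_neg.2 (ha hkj))]
    linarith

def IsSeparatedPiece (E F : Set ℝ) (x ρ R : ℝ) : Prop :=
  F ⊆ E ∧ E ∩ closedBall x ρ ⊆ F ∧ F ⊆ closedBall x R ∧ ∀ y ∈ F, ∀ z ∈ E \ F, ρ ≤ dist y z

lemma isSeparatedPiece_singleton (ha : StrictAnti a) (h0 : ∀ n, 0 ≤ a n)
    (hgap : StrictAnti fun n => a n - a (n + 1)) {k N : ℕ} (hkN : k < N) :
    IsSeparatedPiece (insert 0 (range a)) {a k} (a k) (a N - a (N + 1)) (a N) := by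
  refine ⟨singleton_subset_iff.2 (mem_insert_of_mem _ (mem_range_self k)),
    fun z ⟨hz, hzx⟩ => by_contra fun hne => ?_,
    singleton_subset_iff.2 (mem_closedBall_self (h0 _)), fun y hy z ⟨hz, hne⟩ => ?_⟩
  · exact (sub_succ_lt_abs_sub ha h0 hgap hkN hz hne).not_ge (Real.dist_eq z (a k) ▸ hzx)
  · rw [mem_singleton_iff.1 hy, dist_comm, Real.dist_eq]
    exact (sub_succ_lt_abs_sub ha h0 hgap hkN hz hne).le

lemma isSeparatedPiece_inter_Iic (ha : StrictAnti a) (h0 : ∀ n, 0 ≤ a n)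
    (hgap : StrictAnti fun n => a n - a (n + 1)) {n : ℕ} {x : ℝ} (hx : x ∈ insert 0 (range a))
    (hxn : x ≤ a (n + 1)) :
    IsSeparatedPiece (insert 0 (range a)) (insert 0 (range a) ∩ Iic (a (n + 1))) x
      (a (n + 1) - a (n + 1 + 1)) (a (n + 1)) := by
  have hn : a (n + 1) - a (n + 1 + 1) < a n - a (n + 1) := hgap n.lt_succ_self
  have hdrop : a (n + 1) < a n := ha n.lt_succ_self
  have nonneg : ∀ y ∈ insert 0 (range a), 0 ≤ y := by
    rintro y (rfl | ⟨k, rfl⟩)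
    exacts [le_rfl, h0 k]
  have far : ∀ z ∈ insert 0 (range a), z ∉ Iic (a (n + 1)) → a n ≤ z := fun z hz hzF =>
    le_of_apply_succ_lt ha h0 hz (not_le.1 hzF)
  refine ⟨inter_subset_left, fun z ⟨hz, hzx⟩ => ⟨hz, by_contra fun hzF => ?_⟩,
    fun y ⟨hy, hyn⟩ => ?_, fun y ⟨_, hyn⟩ z ⟨hz, hzF⟩ => ?_⟩
  · have := far z hz hzF
    rw [mem_closedBall, Real.dist_eq, abs_le] at hzx
    linarith
  · have := nonneg x hx
    have := nonneg y hy
    rw [mem_Iic] at hyn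
    rw [mem_closedBall, Real.dist_eq, abs_le]
    constructor <;> linarith
  · have := far z hz (fun h => hzF ⟨hz, h⟩)
    rw [mem_Iic] at hyn
    rw [dist_comm, Real.dist_eq, abs_of_pos (by linarith)]
    linarith

lemma exists_isSeparatedPiece (ha : StrictAnti a) (h0 : ∀ n, 0 ≤ a n)
    (hgap : StrictAnti fun n => a n - a (n + 1)) {N : ℕ} (hN : N ≠ 0) {x : ℝ}
    (hx : x ∈ insert 0 (range a)) :
    ∃ F, IsSeparatedPiece (insert 0 (range a)) F x (a N - a (N + 1)) (a N) := by
  obtain ⟨n, rfl⟩ : ∃ n, N = n + 1 := ⟨N - 1, by omega⟩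
  by_cases hxn : x ≤ a (n + 1)
  · exact ⟨_, isSeparatedPiece_inter_Iic ha h0 hgap hx hxn⟩
  · obtain ⟨k, rfl⟩ : x ∈ range a := hx.resolve_left fun hx0 => hxn (hx0 ▸ h0 _)
    exact ⟨_, isSeparatedPiece_singleton ha h0 hgap (ha.lt_iff_gt.1 (not_le.1 hxn))⟩

theorem quasiUniformlyDisconnectedSet_insert_zero_range (ha : StrictAnti a)
    (hlim : Tendsto a atTop (𝓝 0)) (hgap : StrictAnti fun n => a n - a (n + 1))
    (hlog : Tendsto (fun r => log (firstLEGap a r) / log r) (𝓝[>] 0) (𝓝 1)) :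
    QuasiUniformlyDisconnectedSet (insert 0 (range a)) := by
  have hpos := ha.pos_of_tendsto_zero hlim
  refine ⟨firstLEGap a, fun r hr => ⟨firstLEGap_pos ha, firstLEGap_lt ha hlim hr⟩, hlog, a 0,
    hpos 0, fun x hx r hr0 hr => ?_⟩
  have hex := exists_apply_le_of_tendsto hlim hr0
  have hN : firstLE a r ≠ 0 := (lt_firstLE_of_lt_apply ha.antitone hex hr).ne'
  obtain ⟨F, hFE, hball, hF, hsep⟩ :=
    exists_isSeparatedPiece ha (fun n => (hpos n).le) hgap hN hx
  exact ⟨F, hFE, hball, hF.trans (closedBall_subset_closedBall (apply_firstLE_le hex)), hsep⟩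

end Sequence

lemma tendsto_const_add_mul_log_div_rpow (A B : ℝ) {p : ℝ} (hp : 0 < p) :
    Tendsto (fun x => (A + B * log x) / x ^ p) atTop (𝓝 0) := by
  have hA : Tendsto (fun x : ℝ => A / x ^ p) atTop (𝓝 0) :=
    tendsto_const_nhds.div_atTop (tendsto_rpow_atTop hp)
  have hlog := ((isLittleO_log_rpow_atTop hp).tendsto_div_nhds_zero).const_mul B
  simpa only [add_div, mul_div_assoc, mul_zero, add_zero] using hA.add hlog

lemma one_le_log_div_log {s r : ℝ} (hs : 0 < s) (hsr : s ≤ r) (hr : r < 1) :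
    1 ≤ log s / log r := by
  rw [le_div_iff_of_neg (log_neg (hs.trans_le hsr) hr), one_mul]
  exact log_le_log hs hsr

lemma log_div_log_le {r s c L : ℝ} (hr : 0 < r) (hc : 0 < c) (hc1 : c ≤ 1) (hs : r * c ≤ s)
    (hL : 0 < L) (hLr : L ≤ -log r) : log s / log r ≤ 1 + -log c / L := by
  have hlogr : log r < 0 := by linarith
  have hlogs : log r + log c ≤ log s := by
    rw [← log_mul hr.ne' hc.ne']
    exact log_le_log (by positivity) hs
  have hq : 0 ≤ -log c / L := div_nonneg (neg_nonneg.2 (log_nonpos hc.le hc1)) hL.le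
  have hqr : -log c / L * log r ≤ log c := by
    calc -log c / L * log r ≤ -log c / L * -L := mul_le_mul_of_nonneg_left (by linarith) hq
      _ = log c := by field_simp
  rw [div_le_iff_of_neg hlogr]
  linarith

section Product

variable {α : ℝ}

lemma aSeq_zero : aSeq α 0 = 1 := by simp [aSeq]

lemma aSeq_succ (k : ℕ) : aSeq α (k + 1) = aSeq α k * (1 - ((k : ℝ) + 2) ^ (-α)) := by
  rw [aSeq, aSeq, Finset.prod_Icc_succ_top (Nat.le_add_left 1 k)]
  push_cast
  ring_nf

lemma aSet_eq_insert_zero_range : aSet α = insert 0 (range (aSeq α)) := by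
  ext x
  simp only [aSet, mem_insert_iff, mem_ofPred_eq, mem_range]
  constructor
  · rintro (h | h | ⟨k, -, rfl⟩)
    exacts [.inl h, .inr ⟨0, h ▸ aSeq_zero⟩, .inr ⟨k, rfl⟩]
  · rintro (h | ⟨_ | k, rfl⟩)
    exacts [.inl h, .inr (.inl aSeq_zero), .inr (.inr ⟨k + 1, k.succ_pos, rfl⟩)]

lemma rpow_neg_lt_one (hα : 0 < α) {x : ℝ} (hx : 1 < x) : x ^ (-α) < 1 :=
  rpow_lt_one_of_one_lt_of_neg hx (neg_lt_zero.2 hα)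

lemma aSeq_pos (hα : 0 < α) (k : ℕ) : 0 < aSeq α k := by
  induction k with
  | zero => simp [aSeq_zero]
  | succ k ih =>
    rw [aSeq_succ]
    exact mul_pos ih (sub_pos.2 (rpow_neg_lt_one hα (by linarith [k.cast_nonneg (α := ℝ)])))

lemma aSeq_sub_succ (k : ℕ) : aSeq α k - aSeq α (k + 1) = aSeq α k * ((k : ℝ) + 2) ^ (-α) := by
  rw [aSeq_succ]
  ring

lemma aSeq_strictAnti (hα : 0 < α) : StrictAnti (aSeq α) :=
  strictAnti_nat_of_succ_lt fun k =>
    sub_pos.1 (aSeq_sub_succ k ▸ mul_pos (aSeq_pos hα k) (by positivity))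

lemma aSeq_sub_succ_strictAnti (hα : 0 < α) :
    StrictAnti fun k => aSeq α k - aSeq α (k + 1) := by
  refine strictAnti_nat_of_succ_lt fun k => ?_
  simp only [aSeq_sub_succ, Nat.cast_succ]
  refine mul_lt_mul (aSeq_strictAnti hα k.lt_succ_self)
    (rpow_le_rpow_of_nonpos (by positivity) (by linarith) (by linarith)) (by positivity)
    (aSeq_pos hα k).le

lemma rpow_one_sub_div_four_le (hα : 0 ≤ α) {x : ℝ} (hx : 1 ≤ x) :
    (x + 3) ^ (1 - α) / 4 ≤ x * (x + 1) ^ (-α) := by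
  rw [sub_eq_add_neg, rpow_add (by linarith), rpow_one, mul_div_right_comm]
  exact mul_le_mul (by linarith) (rpow_le_rpow_of_nonpos (by linarith) (by linarith)
    (by linarith)) (by positivity) (by linarith)

lemma aSeq_le_exp (hα : 0 < α) {k : ℕ} (hk : 1 ≤ k) :
    aSeq α k ≤ exp (-(((k : ℝ) + 3) ^ (1 - α) / 4)) := by
  have hfactor_nonneg : ∀ i ∈ Finset.Icc 1 k, 0 ≤ 1 - ((i : ℝ) + 1) ^ (-α) := fun i hi => by
    have : (1 : ℝ) ≤ i := by exact_mod_cast (Finset.mem_Icc.1 hi).1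
    exact (sub_pos.2 (rpow_neg_lt_one hα (by linarith))).le
  have hfactor_le : ∀ i ∈ Finset.Icc 1 k,
      1 - ((i : ℝ) + 1) ^ (-α) ≤ exp (-((k : ℝ) + 1) ^ (-α)) := fun i hi => by
    have hik : (i : ℝ) ≤ k := by exact_mod_cast (Finset.mem_Icc.1 hi).2
    have := rpow_le_rpow_of_nonpos (by positivity) (by linarith : (i : ℝ) + 1 ≤ k + 1)
      (neg_nonpos.2 hα.le)
    linarith [add_one_le_exp (-((k : ℝ) + 1) ^ (-α))]
  calc aSeq α k ≤ ∏ _i ∈ Finset.Icc 1 k, exp (-((k : ℝ) + 1) ^ (-α)) :=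
        Finset.prod_le_prod hfactor_nonneg hfactor_le
    _ = exp (-((k : ℝ) + 1) ^ (-α)) ^ k := by
        rw [Finset.prod_const, Nat.card_Icc, Nat.add_sub_cancel]
    _ = exp (-(k * ((k : ℝ) + 1) ^ (-α))) := by rw [← exp_nat_mul]; ring_nf
    _ ≤ exp (-(((k : ℝ) + 3) ^ (1 - α) / 4)) :=
        exp_le_exp.2 (neg_le_neg (rpow_one_sub_div_four_le hα.le (by exact_mod_cast hk)))

lemma aSeq_tendsto_zero (hα0 : 0 < α) (hα1 : α < 1) : Tendsto (aSeq α) atTop (𝓝 0) := by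
  refine squeeze_zero' (.of_forall fun k => (aSeq_pos hα0 k).le)
    (eventually_atTop.2 ⟨1, fun k hk => aSeq_le_exp hα0 hk⟩) ?_
  refine tendsto_exp_atBot.comp (tendsto_neg_atTop_atBot.comp ?_)
  exact ((tendsto_rpow_atTop (by linarith)).comp (tendsto_atTop_add_const_right _ 3
    tendsto_natCast_atTop_atTop)).atTop_div_const (by norm_num)

lemma log_firstLEGap_div_log_le (hα0 : 0 < α) (hα1 : α < 1) {r : ℝ} (hr0 : 0 < r)
    (hr : r < aSeq α 1) :
    log (firstLEGap (aSeq α) r) / log r ≤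
      1 + (-log (1 - 2 ^ (-α)) + α * log ((firstLE (aSeq α) r : ℝ) + 2)) /
        (((firstLE (aSeq α) r : ℝ) + 2) ^ (1 - α) / 4) := by
  have hex := exists_apply_le_of_tendsto (aSeq_tendsto_zero hα0 hα1) hr0
  have hN := lt_firstLE_of_lt_apply (aSeq_strictAnti hα0).antitone hex hr
  obtain ⟨k, hk⟩ : ∃ k, firstLE (aSeq α) r = k + 1 := ⟨_, (Nat.sub_add_cancel hN.le).symm⟩
  have hrk : r < aSeq α k := lt_apply_of_lt_firstLE (by omega)
  have hm : ((k + 1 : ℕ) : ℝ) + 2 = k + 3 := by push_cast; ring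
  have hψ : firstLEGap (aSeq α) r =
      aSeq α k * (1 - ((k : ℝ) + 2) ^ (-α)) * ((k : ℝ) + 3) ^ (-α) := by
    rw [firstLEGap, aSeq_sub_succ, hk, aSeq_succ, hm]
  have h2 : ((k : ℝ) + 2) ^ (-α) ≤ 2 ^ (-α) :=
    rpow_le_rpow_of_nonpos (by norm_num) (by linarith [k.cast_nonneg (α := ℝ)])
      (neg_nonpos.2 hα0.le)
  have hc2 : 0 < 1 - (2 : ℝ) ^ (-α) := sub_pos.2 (rpow_neg_lt_one hα0 one_lt_two)
  have hc : 0 < (1 - (2 : ℝ) ^ (-α)) * ((k : ℝ) + 3) ^ (-α) := by positivity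
  have hlog_c : -log ((1 - (2 : ℝ) ^ (-α)) * ((k : ℝ) + 3) ^ (-α)) =
      -log (1 - 2 ^ (-α)) + α * log ((k : ℝ) + 3) := by
    rw [log_mul hc2.ne' (by positivity), log_rpow (by positivity)]
    ring
  rw [hk, hm, ← hlog_c]
  refine log_div_log_le hr0 hc ?_ ?_ (by positivity) ?_
  · exact mul_le_one₀ (by linarith [(rpow_pos_of_pos two_pos (-α))])
      (by positivity) (rpow_le_one_of_one_le_of_nonpos (by linarith) (by linarith))
  · rw [hψ, mul_assoc]
    refine mul_le_mul hrk.le (mul_le_mul_of_nonneg_right (by linarith) (by positivity))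
      hc.le (aSeq_pos hα0 k).le
  · have hk1 : 1 ≤ k := by omega
    have := (log_lt_log hr0 hrk).trans_le
      ((log_le_iff_le_exp (aSeq_pos hα0 k)).2 (aSeq_le_exp hα0 hk1))
    linarith

lemma tendsto_log_firstLEGap_div_log (hα0 : 0 < α) (hα1 : α < 1) :
    Tendsto (fun r => log (firstLEGap (aSeq α) r) / log r) (𝓝[>] 0) (𝓝 1) := by
  have hm : Tendsto (fun r => (firstLE (aSeq α) r : ℝ) + 2) (𝓝[>] 0) atTop :=
    tendsto_atTop_add_const_right _ 2 (tendsto_natCast_atTop_atTop.comp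
      (tendsto_firstLE (aSeq_strictAnti hα0) (aSeq_tendsto_zero hα0 hα1)))
  have hB : Tendsto (fun x : ℝ => (-log (1 - 2 ^ (-α)) + α * log x) / (x ^ (1 - α) / 4))
      atTop (𝓝 0) := by
    simpa only [div_div_eq_mul_div, mul_div_right_comm, zero_mul] using
      (tendsto_const_add_mul_log_div_rpow (-log (1 - 2 ^ (-α))) α (sub_pos.2 hα1)).mul_const 4
  refine tendsto_of_tendsto_of_tendsto_of_le_of_le' tendsto_const_nhds
    (by simpa using (hB.comp hm).const_add 1) ?_ ?_
  all_goals filter_upwards [Ioo_mem_nhdsGT (aSeq_pos hα0 1)] with r hr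
  · exact one_le_log_div_log (firstLEGap_pos (aSeq_strictAnti hα0))
      (firstLEGap_lt (aSeq_strictAnti hα0) (aSeq_tendsto_zero hα0 hα1) hr.1).le
      ((hr.2.trans (aSeq_strictAnti hα0 zero_lt_one)).trans_eq aSeq_zero)
  · exact log_firstLEGap_div_log_le hα0 hα1 hr.1 hr.2

end Product

/-- For `0 < α < 1` and `a_k = ∏_{i=1}^k (1 - (i+1)^(-α))`, the compact set
`E = {0, 1, a_1, a_2, …}` is quasi uniformly disconnected. -/
theorem aSet_quasiUniformlyDisconnected (α : ℝ) (hα0 : 0 < α) (hα1 : α < 1) :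
    QuasiUniformlyDisconnectedSet (aSet α) := by
  rw [aSet_eq_insert_zero_range]
  exact quasiUniformlyDisconnectedSet_insert_zero_range (aSeq_strictAnti hα0)
    (aSeq_tendsto_zero hα0 hα1) (aSeq_sub_succ_strictAnti hα0)
    (tendsto_log_firstLEGap_div_log hα0 hα1)
end

section
/- Let n_k = 3^k and c_k = 3^{−2k} for all k ≥ 1. Then every Moran set K ∈ M([0,1], {n_k}, {c_k}) satisfies dim_qA K = 1/2. -/
open Filter Topology Metric Set

/-- `coverNum X r R` : the smallest number of closed balls of radius `r` needed to cover
`X ∩ B` over all closed balls `B` of radius `R`. -/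
noncomputable def coverNum (X : Type*) [MetricSpace X] (r R : ℝ) : ℕ :=
  sSup {n : ℕ | ∃ x : X, n = sInf {m : ℕ | ∃ s : Finset X,
    s.card = m ∧ Metric.closedBall x R ⊆ ⋃ y ∈ s, Metric.closedBall y r}}

/-- `hFun X δ = inf {α ≥ 0 : ∃ b, c > 0, N_{r,R}(X) ≤ c (R/r)^α for all 0 < r < r^(1-δ) ≤ R < b}`. -/
noncomputable def hFun (X : Type*) [MetricSpace X] (δ : ℝ) : ℝ :=
  sInf {α : ℝ | 0 ≤ α ∧ ∃ b c : ℝ, 0 < b ∧ 0 < c ∧ ∀ r R : ℝ,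
    0 < r → r < r ^ (1 - δ) → r ^ (1 - δ) ≤ R → R < b →
      (coverNum X r R : ℝ) ≤ c * (R / r) ^ α}

/-- The quasi-Assouad dimension `dim_qA X = lim_{δ → 0⁺} h_X(δ)`; since `h_X` is
non-increasing in `δ`, this limit equals the supremum over `δ ∈ (0,1)`. -/
noncomputable def dimqA (X : Type*) [MetricSpace X] : ℝ :=
  sSup (hFun X '' Set.Ioo 0 1)

/-- A word `i₁ ⋯ i_k` (as a list, head = `i₁`) is admissible for the branching numbers `n`
if `1 ≤ i_t ≤ n t` for every `t`. -/
def MoranAdmissible (n : ℕ → ℕ) (w : List ℕ) : Prop :=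
  ∀ t : ℕ, t < w.length → 1 ≤ w.getD t 0 ∧ w.getD t 0 ≤ n (t + 1)

/-- `F ∈ M(J, {n_k}, {c_k})` : `F` is a Moran set with initial closed interval `J`,
branching numbers `n_k` and contraction ratios `c_k` (indices start at `1`). -/
def IsMoranSet (J : Set ℝ) (n : ℕ → ℕ) (c : ℕ → ℝ) (F : Set ℝ) : Prop :=
  ∃ A B : ℝ, A < B ∧ J = Set.Icc A B ∧
  ∃ a b : List ℕ → ℝ,
    a [] = A ∧ b [] = B ∧
    (∀ w : List ℕ, MoranAdmissible n w → ∀ j : ℕ, 1 ≤ j → j ≤ n (w.length + 1) →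
      a w ≤ a (w ++ [j]) ∧ a (w ++ [j]) < b (w ++ [j]) ∧ b (w ++ [j]) ≤ b w ∧
      b (w ++ [j]) - a (w ++ [j]) = c (w.length + 1) * (b w - a w)) ∧
    (∀ w : List ℕ, MoranAdmissible n w → ∀ j j' : ℕ, 1 ≤ j → j ≤ n (w.length + 1) →
      1 ≤ j' → j' ≤ n (w.length + 1) → j ≠ j' →
      interior (Set.Icc (a (w ++ [j])) (b (w ++ [j]))) ∩
        interior (Set.Icc (a (w ++ [j'])) (b (w ++ [j']))) = ∅) ∧
    F = ⋂ k : ℕ, ⋃ w ∈ {w : List ℕ | MoranAdmissible n w ∧ w.length = k},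
      Set.Icc (a w) (b w)

/-!
A level-`m` basic interval has length `3^{-m(m+1)}`, and a level-`k` interval contains exactly
`3^S` level-`l` intervals, `S = ∑_{k<i≤l} i = (l(l+1) - k(k+1))/2`. Since these intervals have
disjoint interiors, a packing count shows `N_{r,R} ≍ 3^S = (R/r)^{1/2}` at the scales
`R = 3^{-k(k+1)}`, `r = 3^{-l(l+1)}`, so `h(δ) ≥ 1/2`. For arbitrary `r < R`, with
`r < 3^{-l(l+1)}`, rounding to these scales costs a factor `3^{O(l)}`, which `R ≥ r^{1-δ}`
absorbs: `(R/r)^{α-1/2} ≥ r^{-δ(α-1/2)} ≥ 3^{δ(α-1/2) l(l+1)}`. Hence `h(δ) = 1/2` for all `δ`.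
-/

theorem coverNum_le_of_forall_exists_cover {X : Type*} [MetricSpace X] {r R : ℝ} {M : ℕ}
    (h : ∀ x : X, ∃ s : Finset X, closedBall x R ⊆ ⋃ y ∈ s, closedBall y r ∧ s.card ≤ M) :
    coverNum X r R ≤ M := by
  refine csSup_le' ?_
  rintro _ ⟨x, rfl⟩
  obtain ⟨s, hcover, hcard⟩ := h x
  exact le_trans (Nat.sInf_le ⟨s, rfl, hcover⟩) hcard

theorem exists_cover_card_le_coverNum {X : Type*} [MetricSpace X] {r R : ℝ}
    (h : ∃ M : ℕ, ∀ x : X, ∃ s : Finset X, closedBall x R ⊆ ⋃ y ∈ s, closedBall y r ∧ s.card ≤ M)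
    (x : X) :
    ∃ s : Finset X, closedBall x R ⊆ ⋃ y ∈ s, closedBall y r ∧ s.card ≤ coverNum X r R := by
  obtain ⟨M, hM⟩ := h
  obtain ⟨s₀, hs₀, -⟩ := hM x
  obtain ⟨s, hcard, hcover⟩ := Nat.sInf_mem (s := {m | ∃ s : Finset X,
    s.card = m ∧ closedBall x R ⊆ ⋃ y ∈ s, closedBall y r}) ⟨s₀.card, s₀, rfl, hs₀⟩
  refine ⟨s, hcover, hcard ▸ le_csSup ⟨M, ?_⟩ ⟨x, rfl⟩⟩
  rintro _ ⟨y, rfl⟩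
  obtain ⟨t, hcover', hcard'⟩ := hM y
  exact le_trans (Nat.sInf_le ⟨t, rfl, hcover'⟩) hcard'

/-- `hFun X δ` is the infimum of the nonnegative `α` with `HasCoverBound X δ α`. -/
def HasCoverBound (X : Type*) [MetricSpace X] (δ α : ℝ) : Prop :=
  ∃ b c : ℝ, 0 < b ∧ 0 < c ∧ ∀ r R : ℝ, 0 < r → r < r ^ (1 - δ) → r ^ (1 - δ) ≤ R → R < b →
    (coverNum X r R : ℝ) ≤ c * (R / r) ^ α

theorem hFun_eq_of_forall {X : Type*} [MetricSpace X] {δ β : ℝ} (hβ : 0 ≤ β)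
    (hup : ∀ α, β < α → HasCoverBound X δ α) (hlow : ∀ α, HasCoverBound X δ α → β ≤ α) :
    hFun X δ = β :=
  IsGLB.csInf_eq (isGLB_Ioi.of_subset_of_superset isGLB_Ici
    (fun α hα => ⟨hβ.trans (le_of_lt hα), hup α hα⟩) fun α hα => hlow α hα.2)
    ⟨β + 1, by linarith, hup _ (by linarith)⟩

theorem card_mul_le_of_pairwiseDisjoint_Ioo {ι : Type*} (t : Finset ι) (x : ι → ℝ) {L p q : ℝ}
    (hL : 0 ≤ L) (hpq : p ≤ q) (hdisj : (t : Set ι).PairwiseDisjoint fun i => Ioo (x i) (x i + L))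
    (hmeet : ∀ i ∈ t, p ≤ x i + L ∧ x i ≤ q) :
    t.card * L ≤ q - p + 2 * L := by
  have hsub : ⋃ i ∈ t, Ioo (x i) (x i + L) ⊆ Icc (p - L) (q + L) :=
    iUnion₂_subset fun i hi =>
      Ioo_subset_Icc_self.trans
        (Icc_subset_Icc (by linarith [hmeet i hi]) (by linarith [hmeet i hi]))
  have hvol := MeasureTheory.measure_mono (μ := MeasureTheory.volume) hsub
  rw [MeasureTheory.measure_biUnion_finset hdisj fun _ _ => measurableSet_Ioo] at hvol
  simp only [Real.volume_Ioo, Real.volume_Icc, add_sub_cancel_left, Finset.sum_const,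
    nsmul_eq_mul] at hvol
  rw [← ENNReal.ofReal_natCast, ← ENNReal.ofReal_mul (by positivity),
    ENNReal.ofReal_le_ofReal_iff (by linarith)] at hvol
  linarith

theorem one_le_of_eventually_le_mul_rpow {ι : Type*} {L : Filter ι} [L.NeBot] {f : ι → ℝ}
    {C γ : ℝ} (hf : Tendsto f L atTop) (h : ∀ᶠ i in L, f i ≤ C * f i ^ γ) : 1 ≤ γ := by
  by_contra! hγ
  have hpow := (tendsto_rpow_atTop (sub_pos.2 hγ)).comp hf
  obtain ⟨i, hi, hCi, hfi⟩ :=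
    (h.and ((hpow.eventually_gt_atTop C).and (hf.eventually_gt_atTop 0))).exists
  have hsplit : f i = f i ^ (1 - γ) * f i ^ γ := by
    rw [← Real.rpow_add hfi, sub_add_cancel, Real.rpow_one]
  have := Real.rpow_pos_of_pos hfi γ
  simp only [Function.comp] at hCi
  nlinarith

section Words

variable {n : ℕ → ℕ} {u w : List ℕ} {j : ℕ}

theorem MoranAdmissible.nil : MoranAdmissible n [] := fun _ ht => absurd ht (Nat.not_lt_zero _)

theorem MoranAdmissible.of_prefix (hw : MoranAdmissible n w) (hu : u <+: w) :
    MoranAdmissible n u := by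
  obtain ⟨v, rfl⟩ := hu
  intro t ht
  simpa only [List.getD_append _ _ _ _ ht] using hw t (by simp; omega)

theorem moranAdmissible_append_singleton_iff :
    MoranAdmissible n (w ++ [j]) ↔ MoranAdmissible n w ∧ 1 ≤ j ∧ j ≤ n (w.length + 1) := by
  refine ⟨fun h => ⟨h.of_prefix (List.prefix_append _ _), by simpa using h w.length (by simp)⟩,
    fun ⟨hw, hj⟩ t ht => ?_⟩
  rcases Nat.lt_or_ge t w.length with ht | ht
  · simpa only [List.getD_append _ _ _ _ ht] using hw t ht
  · obtain rfl : t = w.length := by simp at *; omega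
    simpa using hj

theorem MoranAdmissible.append_replicate_one (hn : ∀ i, 0 < n i) (hw : MoranAdmissible n w)
    (m : ℕ) : MoranAdmissible n (w ++ List.replicate m 1) := by
  induction m with
  | zero => simpa using hw
  | succ m ih =>
    rw [List.replicate_succ', ← List.append_assoc]
    exact moranAdmissible_append_singleton_iff.2 ⟨ih, le_rfl, hn _⟩

def moranExtensions (n : ℕ → ℕ) (u : List ℕ) : ℕ → Finset (List ℕ)
  | 0 => {u}
  | d + 1 => (moranExtensions n u d).biUnion fun w =>
      (Finset.Icc 1 (n (w.length + 1))).image fun j => w ++ [j]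

theorem length_of_mem_moranExtensions {d : ℕ} (hw : w ∈ moranExtensions n u d) :
    w.length = u.length + d := by
  induction d generalizing w with
  | zero => simp_all [moranExtensions]
  | succ d ih =>
    simp only [moranExtensions, Finset.mem_biUnion, Finset.mem_image] at hw
    obtain ⟨w', hw', j, -, rfl⟩ := hw
    simp [ih hw', Nat.add_assoc]

theorem mem_moranExtensions_iff (hu : MoranAdmissible n u) {d : ℕ} :
    w ∈ moranExtensions n u d ↔ MoranAdmissible n w ∧ w.length = u.length + d ∧ u <+: w := by
  induction d generalizing w with
  | zero =>
    simp only [moranExtensions, Finset.mem_singleton, Nat.add_zero]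
    refine ⟨by rintro rfl; exact ⟨hu, rfl, List.prefix_rfl⟩, fun ⟨_, hl, hp⟩ => ?_⟩
    exact (hp.eq_of_length hl.symm).symm
  | succ d ih =>
    simp only [moranExtensions, Finset.mem_biUnion, Finset.mem_image, Finset.mem_Icc]
    constructor
    · rintro ⟨w', hw', j, hj, rfl⟩
      obtain ⟨hadm, hl, hp⟩ := ih.1 hw'
      exact ⟨moranAdmissible_append_singleton_iff.2 ⟨hadm, hj⟩, by simp [hl, Nat.add_assoc],
        hp.trans (List.prefix_append _ _)⟩
    · rintro ⟨hadm, hl, hp⟩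
      obtain ⟨w', j, rfl⟩ := (List.eq_nil_or_concat' w).resolve_left
        (by rintro rfl; simp at hl)
      obtain ⟨hw', hj⟩ := moranAdmissible_append_singleton_iff.1 hadm
      have hl' : w'.length = u.length + d := by simp at hl; omega
      have hp' : u <+: w' := (List.prefix_concat_iff.1 hp).resolve_left
        (by rintro rfl; simp at hl'; omega)
      exact ⟨w', ih.2 ⟨hw', hl', hp'⟩, j, hj, rfl⟩

theorem card_moranExtensions (n : ℕ → ℕ) (u : List ℕ) (d : ℕ) :
    (moranExtensions n u d).card = ∏ i ∈ Finset.Ioc u.length (u.length + d), n i := by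
  induction d with
  | zero => simp [moranExtensions]
  | succ d ih =>
    rw [moranExtensions, Finset.card_biUnion, Finset.sum_congr rfl fun w hw => ?_,
      Finset.sum_const, smul_eq_mul, ih, ← Nat.add_assoc, Finset.prod_Ioc_succ_top (by omega)]
    · rw [Finset.card_image_of_injective _ fun j j' h => by simpa using h, Nat.card_Icc,
        length_of_mem_moranExtensions hw, Nat.add_sub_cancel]
    · intro w _ w' _ hne
      simp only [Function.onFun, Finset.disjoint_left, Finset.mem_image]
      rintro _ ⟨j, -, rfl⟩ ⟨j', -, h⟩
      exact hne (List.append_inj' h rfl).1.symm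

theorem card_le_prod_mul_card_image_take {t : Finset (List ℕ)} {k l : ℕ} (hkl : k ≤ l)
    (ht : ∀ w ∈ t, MoranAdmissible n w ∧ w.length = l) :
    t.card ≤ (∏ i ∈ Finset.Ioc k l, n i) * (t.image (List.take k)).card := by
  refine Finset.card_le_mul_card_image _ _ fun u hu => ?_
  obtain ⟨w, hw, rfl⟩ := Finset.mem_image.1 hu
  have hadm := (ht w hw).1.of_prefix (List.take_prefix k w)
  have hlen : (w.take k).length = k := by simp [(ht w hw).2, hkl]
  calc (t.filter (List.take k · = w.take k)).card
      ≤ (moranExtensions n (w.take k) (l - k)).card := by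
        refine Finset.card_le_card fun v hv => ?_
        obtain ⟨hvt, hvw⟩ := Finset.mem_filter.1 hv
        refine (mem_moranExtensions_iff hadm).2 ⟨(ht v hvt).1, ?_, hvw ▸ List.take_prefix k v⟩
        rw [hlen, (ht v hvt).2]
        omega
    _ = ∏ i ∈ Finset.Ioc k l, n i := by
        rw [card_moranExtensions, hlen, Nat.add_sub_cancel' hkl]

end Words

/-- `IsMoranSet` with the basic intervals `Icc (a w) (b w)` named, and all conditions on a
child `w ++ [j]` indexed by the admissibility of the child itself. -/
structure IsMoranConstruction (n : ℕ → ℕ) (c : ℕ → ℝ) (a b : List ℕ → ℝ) (F : Set ℝ) :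
    Prop where
  root_lt : a [] < b []
  le_left_child : ∀ w j, MoranAdmissible n (w ++ [j]) → a w ≤ a (w ++ [j])
  child_lt : ∀ w j, MoranAdmissible n (w ++ [j]) → a (w ++ [j]) < b (w ++ [j])
  right_child_le : ∀ w j, MoranAdmissible n (w ++ [j]) → b (w ++ [j]) ≤ b w
  length_child : ∀ w j, MoranAdmissible n (w ++ [j]) →
    b (w ++ [j]) - a (w ++ [j]) = c (w.length + 1) * (b w - a w)
  disjoint_child : ∀ w j j', MoranAdmissible n (w ++ [j]) → MoranAdmissible n (w ++ [j']) →
    j ≠ j' → Disjoint (Ioo (a (w ++ [j])) (b (w ++ [j]))) (Ioo (a (w ++ [j'])) (b (w ++ [j'])))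
  eq_iInter : F = ⋂ k : ℕ, ⋃ w ∈ {w : List ℕ | MoranAdmissible n w ∧ w.length = k},
    Icc (a w) (b w)

theorem IsMoranSet.exists_isMoranConstruction {J : Set ℝ} {n : ℕ → ℕ} {c : ℕ → ℝ} {F : Set ℝ}
    (h : IsMoranSet J n c F) :
    ∃ a b : List ℕ → ℝ, J = Icc (a []) (b []) ∧ IsMoranConstruction n c a b F := by
  obtain ⟨A, B, hAB, rfl, a, b, rfl, rfl, hchild, hdisj, rfl⟩ := h
  have hchild' : ∀ w j, MoranAdmissible n (w ++ [j]) → a w ≤ a (w ++ [j]) ∧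
      a (w ++ [j]) < b (w ++ [j]) ∧ b (w ++ [j]) ≤ b w ∧
      b (w ++ [j]) - a (w ++ [j]) = c (w.length + 1) * (b w - a w) := fun w j h =>
    let ⟨hw, hj⟩ := moranAdmissible_append_singleton_iff.1 h
    hchild w hw j hj.1 hj.2
  refine ⟨a, b, rfl, hAB, fun w j h => (hchild' w j h).1, fun w j h => (hchild' w j h).2.1,
    fun w j h => (hchild' w j h).2.2.1, fun w j h => (hchild' w j h).2.2.2,
    fun w j j' h h' hne => ?_, rfl⟩
  obtain ⟨hw, hj⟩ := moranAdmissible_append_singleton_iff.1 h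
  obtain ⟨-, hj'⟩ := moranAdmissible_append_singleton_iff.1 h'
  rw [Set.disjoint_iff_inter_eq_empty, ← interior_Icc, ← interior_Icc]
  exact hdisj w hw j j' hj.1 hj.2 hj'.1 hj'.2 hne

def moranLength (c : ℕ → ℝ) (a b : List ℕ → ℝ) (m : ℕ) : ℝ :=
  (b [] - a []) * ∏ i ∈ Finset.range m, c (i + 1)

namespace IsMoranConstruction

variable {n : ℕ → ℕ} {c : ℕ → ℝ} {a b : List ℕ → ℝ} {F : Set ℝ} {u w : List ℕ} {k l : ℕ}

theorem Icc_subset_of_prefix (hM : IsMoranConstruction n c a b F) (hw : MoranAdmissible n w)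
    (hu : u <+: w) : Icc (a w) (b w) ⊆ Icc (a u) (b u) := by
  induction w using List.reverseRecOn with
  | nil => rw [List.prefix_nil.1 hu]
  | append_singleton w j ih =>
    rcases List.prefix_concat_iff.1 hu with rfl | hu
    · exact subset_rfl
    · exact (Icc_subset_Icc (hM.le_left_child w j hw) (hM.right_child_le w j hw)).trans
        (ih (hw.of_prefix (List.prefix_append _ _)) hu)

theorem left_lt_right (hM : IsMoranConstruction n c a b F) (hw : MoranAdmissible n w) :
    a w < b w := by
  rcases List.eq_nil_or_concat' w with rfl | ⟨w, j, rfl⟩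
  exacts [hM.root_lt, hM.child_lt w j hw]

theorem sub_eq_moranLength (hM : IsMoranConstruction n c a b F) (hw : MoranAdmissible n w) :
    b w - a w = moranLength c a b w.length := by
  induction w using List.reverseRecOn with
  | nil => simp [moranLength]
  | append_singleton w j ih =>
    rw [hM.length_child w j hw, ih (hw.of_prefix (List.prefix_append _ _)), moranLength,
      moranLength, List.length_append, List.length_singleton, Finset.prod_range_succ]
    ring

theorem moranLength_pos (hM : IsMoranConstruction n c a b F) (hn : ∀ i, 0 < n i) (m : ℕ) :
    0 < moranLength c a b m := by
  have hw : MoranAdmissible n (List.replicate m 1) := by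
    simpa using MoranAdmissible.nil.append_replicate_one hn m
  have hlen := hM.sub_eq_moranLength hw
  rw [List.length_replicate] at hlen
  linarith [hM.left_lt_right hw]

theorem disjoint_Ioo (hM : IsMoranConstruction n c a b F) {w w' : List ℕ}
    (hw : MoranAdmissible n w) (hw' : MoranAdmissible n w') (hl : w.length = w'.length)
    (hne : w ≠ w') : Disjoint (Ioo (a w) (b w)) (Ioo (a w') (b w')) := by
  induction w using List.reverseRecOn generalizing w' with
  | nil => exact absurd (List.eq_nil_of_length_eq_zero hl.symm).symm hne
  | append_singleton u j ih =>
    obtain ⟨u', j', rfl⟩ := (List.eq_nil_or_concat' w').resolve_left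
      (by rintro rfl; simp at hl)
    have hu := hw.of_prefix (List.prefix_append u [j])
    have hu' := hw'.of_prefix (List.prefix_append u' [j'])
    by_cases huu : u = u'
    · subst huu
      exact hM.disjoint_child u j j' hw hw' fun hjj => hne (hjj ▸ rfl)
    · exact (ih hu hu' (by simpa using hl) huu).mono
        (Ioo_subset_Ioo (hM.le_left_child u j hw) (hM.right_child_le u j hw))
        (Ioo_subset_Ioo (hM.le_left_child u' j' hw') (hM.right_child_le u' j' hw'))

theorem exists_mem_Icc_of_mem (hM : IsMoranConstruction n c a b F) {x : ℝ} (hx : x ∈ F)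
    (m : ℕ) : ∃ w, MoranAdmissible n w ∧ w.length = m ∧ x ∈ Icc (a w) (b w) := by
  rw [hM.eq_iInter] at hx
  obtain ⟨w, hw, hxw⟩ := mem_iUnion₂.1 (mem_iInter.1 hx m)
  exact ⟨w, hw.1, hw.2, hxw⟩

/-- Nested intervals along `w 1 1 1 ⋯`. -/
theorem nonempty_inter_Icc (hM : IsMoranConstruction n c a b F) (hn : ∀ i, 0 < n i)
    (hw : MoranAdmissible n w) : (F ∩ Icc (a w) (b w)).Nonempty := by
  set v : ℕ → List ℕ := fun m => w ++ List.replicate m 1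
  have hv : ∀ m, MoranAdmissible n (v m) := hw.append_replicate_one hn
  have hanti : Antitone fun m => Icc (a (v m)) (b (v m)) := antitone_nat_of_succ_le fun m =>
    hM.Icc_subset_of_prefix (hv (m + 1))
      (by simp only [v, List.replicate_succ', ← List.append_assoc, List.prefix_append])
  have hmem := ciSup_mem_iInter_Icc_of_antitone_Icc hanti fun m => (hM.left_lt_right (hv m)).le
  refine ⟨_, ?_, by simpa [v] using mem_iInter.1 hmem 0⟩
  rw [hM.eq_iInter]
  refine mem_iInter.2 fun k => mem_iUnion₂.2 ⟨(v k).take k, ⟨(hv k).of_prefix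
    (List.take_prefix _ _), by simp [v]⟩, hM.Icc_subset_of_prefix (hv k) (List.take_prefix _ _)
    (mem_iInter.1 hmem k)⟩

theorem card_mul_moranLength_le (hM : IsMoranConstruction n c a b F) (hn : ∀ i, 0 < n i)
    {t : Finset (List ℕ)} {m : ℕ} {p q : ℝ} (hpq : p ≤ q)
    (ht : ∀ w ∈ t, MoranAdmissible n w ∧ w.length = m ∧ a w ≤ q ∧ p ≤ b w) :
    t.card * moranLength c a b m ≤ q - p + 2 * moranLength c a b m := by
  have hb : ∀ w ∈ t, b w = a w + moranLength c a b m := fun w hw => by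
    rw [← (ht w hw).2.1, ← hM.sub_eq_moranLength (ht w hw).1]; ring
  refine card_mul_le_of_pairwiseDisjoint_Ioo t a (hM.moranLength_pos hn m).le hpq
    (fun w hw w' hw' hne => ?_) fun w hw => ⟨hb w hw ▸ (ht w hw).2.2.2, (ht w hw).2.2.1⟩
  simpa only [Function.onFun, ← hb w hw, ← hb w' hw'] using hM.disjoint_Ioo (ht w hw).1
    (ht w' hw').1 ((ht w hw).2.1.trans (ht w' hw').2.1.symm) hne

/-- Take one point of `F` in each level-`l` interval meeting the ball. By packing, these intervals
have at most `2 * R / moranLength c a b k + 2` level-`k` ancestors. -/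
theorem exists_cover (hM : IsMoranConstruction n c a b F) (hn : ∀ i, 0 < n i) (hkl : k ≤ l)
    {r R : ℝ} (hr : moranLength c a b l ≤ r) (hR : 0 ≤ R) (x : F) :
    ∃ s : Finset F, closedBall x R ⊆ ⋃ y ∈ s, closedBall y r ∧
      (s.card : ℝ) ≤ (∏ i ∈ Finset.Ioc k l, n i) * (2 * R / moranLength c a b k + 2) := by
  set t := (moranExtensions n [] l).filter fun w => a w ≤ x + R ∧ x - R ≤ b w
  have ht : ∀ w ∈ t, MoranAdmissible n w ∧ w.length = l ∧ a w ≤ x + R ∧ x - R ≤ b w := by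
    intro w hw
    obtain ⟨hw, hmeet⟩ := Finset.mem_filter.1 hw
    obtain ⟨hadm, hlen, -⟩ := (mem_moranExtensions_iff MoranAdmissible.nil).1 hw
    exact ⟨hadm, by simpa using hlen, hmeet⟩
  choose pt hpt using fun w : t => hM.nonempty_inter_Icc hn (ht w w.2).1
  refine ⟨t.attach.image fun w => ⟨pt w, (hpt w).1⟩, fun z hz => ?_, ?_⟩
  · rw [mem_closedBall, Subtype.dist_eq, Real.dist_eq, abs_le] at hz
    obtain ⟨w, hw, hlen, hzw⟩ := hM.exists_mem_Icc_of_mem z.2 l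
    have hwt : w ∈ t := Finset.mem_filter.2 ⟨(mem_moranExtensions_iff MoranAdmissible.nil).2
      ⟨hw, by simpa using hlen, List.nil_prefix⟩, by linarith [hzw.1], by linarith [hzw.2]⟩
    refine mem_iUnion₂.2 ⟨_, Finset.mem_image_of_mem _ (Finset.mem_attach _ ⟨w, hwt⟩), ?_⟩
    rw [mem_closedBall, Subtype.dist_eq]
    refine (Real.dist_le_of_mem_Icc hzw (hpt ⟨w, hwt⟩).2).trans ?_
    rwa [hM.sub_eq_moranLength hw, hlen]
  · have hpack := hM.card_mul_moranLength_le hn (t := t.image (List.take k)) (m := k)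
      (by linarith : x - R ≤ x + R) fun u hu => by
        obtain ⟨w, hw, rfl⟩ := Finset.mem_image.1 hu
        obtain ⟨hadm, hlen, hwq, hwp⟩ := ht w hw
        have hsub := hM.Icc_subset_of_prefix hadm (List.take_prefix k w)
        rw [Icc_subset_Icc_iff (hM.left_lt_right hadm).le] at hsub
        exact ⟨hadm.of_prefix (List.take_prefix k w), by simp [hlen, hkl],
          hsub.1.trans hwq, hwp.trans hsub.2⟩
    have hL := hM.moranLength_pos hn k
    calc ((t.attach.image _).card : ℝ) ≤ t.card := by
          exact_mod_cast Finset.card_image_le.trans_eq (Finset.card_attach)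
      _ ≤ (∏ i ∈ Finset.Ioc k l, n i) * (t.image (List.take k)).card := by
          exact_mod_cast card_le_prod_mul_card_image_take hkl fun w hw =>
            ⟨(ht w hw).1, (ht w hw).2.1⟩
      _ ≤ (∏ i ∈ Finset.Ioc k l, n i) * (2 * R / moranLength c a b k + 2) := by
          gcongr
          rw [← sub_le_iff_le_add, le_div_iff₀ hL]
          linarith

theorem coverNum_le (hM : IsMoranConstruction n c a b F) (hn : ∀ i, 0 < n i) (hkl : k ≤ l)
    {r R : ℝ} (hr : moranLength c a b l ≤ r) (hR : 0 ≤ R) :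
    (coverNum F r R : ℝ) ≤ (∏ i ∈ Finset.Ioc k l, n i) * (2 * R / moranLength c a b k + 2) := by
  have hL := hM.moranLength_pos hn k
  refine (Nat.cast_le.2 (coverNum_le_of_forall_exists_cover fun x =>
    (hM.exists_cover hn hkl hr hR x).imp fun s hs => ⟨hs.1, Nat.le_floor hs.2⟩)).trans
    (Nat.floor_le (by positivity))

/-- Each level-`l` descendant of `w₀` contains a point of the ball, and a ball of radius
`moranLength c a b l` meets at most four level-`l` intervals. -/
theorem prod_le_four_mul_card_of_cover (hM : IsMoranConstruction n c a b F) (hn : ∀ i, 0 < n i)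
    (hkl : k ≤ l) {w₀ : List ℕ} (hw₀ : MoranAdmissible n w₀) (hlen : w₀.length = k) {x : F}
    (hx : (x : ℝ) ∈ Icc (a w₀) (b w₀)) {s : Finset F}
    (hs : closedBall x (moranLength c a b k) ⊆ ⋃ y ∈ s, closedBall y (moranLength c a b l)) :
    ∏ i ∈ Finset.Ioc k l, n i ≤ 4 * s.card := by
  set L := moranLength c a b l
  set D := moranExtensions n w₀ (l - k)
  have hD : ∀ w ∈ D, MoranAdmissible n w ∧ w.length = l ∧ w₀ <+: w := fun w hw => by
    obtain ⟨hadm, hl, hp⟩ := (mem_moranExtensions_iff hw₀).1 hw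
    exact ⟨hadm, by omega, hp⟩
  have hsub : D ⊆ s.biUnion fun y => D.filter fun w => a w ≤ y + L ∧ y - L ≤ b w := by
    intro w hw
    obtain ⟨z, hzF, hz⟩ := hM.nonempty_inter_Icc hn (hD w hw).1
    have hzx : (⟨z, hzF⟩ : F) ∈ closedBall x (moranLength c a b k) := by
      rw [mem_closedBall, Subtype.dist_eq, ← hlen, ← hM.sub_eq_moranLength hw₀]
      exact Real.dist_le_of_mem_Icc (hM.Icc_subset_of_prefix (hD w hw).1 (hD w hw).2.2 hz) hx
    obtain ⟨y, hy, hzy⟩ := mem_iUnion₂.1 (hs hzx)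
    rw [mem_closedBall, Subtype.dist_eq, Real.dist_eq, abs_le] at hzy
    exact Finset.mem_biUnion.2 ⟨y, hy, Finset.mem_filter.2 ⟨hw, by linarith [hz.1],
      by linarith [hz.2]⟩⟩
  have hfiber : ∀ y ∈ s, (D.filter fun w => a w ≤ y + L ∧ y - L ≤ b w).card ≤ 4 := by
    intro y _
    have hL := hM.moranLength_pos hn l
    have hpack := hM.card_mul_moranLength_le hn (by linarith : (y : ℝ) - L ≤ y + L)
      (t := D.filter fun w => a w ≤ y + L ∧ y - L ≤ b w)
      fun w hw => by
        obtain ⟨hwD, hmeet⟩ := Finset.mem_filter.1 hw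
        exact ⟨(hD w hwD).1, (hD w hwD).2.1, hmeet⟩
    have : ((D.filter fun w => a w ≤ y + L ∧ y - L ≤ b w).card : ℝ) ≤ 4 := by
      nlinarith
    exact_mod_cast this
  calc ∏ i ∈ Finset.Ioc k l, n i = D.card := by
        rw [card_moranExtensions, hlen, Nat.add_sub_cancel' hkl]
    _ ≤ ∑ y ∈ s, (D.filter fun w => a w ≤ y + L ∧ y - L ≤ b w).card :=
        (Finset.card_le_card hsub).trans Finset.card_biUnion_le
    _ ≤ 4 * s.card := by
        simpa [mul_comm] using Finset.sum_le_sum hfiber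

theorem prod_le_four_mul_coverNum (hM : IsMoranConstruction n c a b F) (hn : ∀ i, 0 < n i)
    (hkl : k ≤ l) :
    ∏ i ∈ Finset.Ioc k l, n i ≤ 4 * coverNum F (moranLength c a b l) (moranLength c a b k) := by
  have hw₀ : MoranAdmissible n (List.replicate k 1) := by
    simpa using MoranAdmissible.nil.append_replicate_one hn k
  obtain ⟨x, hxF, hx⟩ := hM.nonempty_inter_Icc hn hw₀
  obtain ⟨s, hs, hcard⟩ := exists_cover_card_le_coverNum ⟨_, fun y =>
    (hM.exists_cover hn le_rfl le_rfl (hM.moranLength_pos hn k).le y).imp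
      fun s hs => ⟨hs.1, Nat.le_floor hs.2⟩⟩ (⟨x, hxF⟩ : F)
  exact (hM.prod_le_four_mul_card_of_cover hn hkl hw₀ List.length_replicate hx hs).trans
    (Nat.mul_le_mul_left 4 hcard)

end IsMoranConstruction

/-- The level-`m` length `∏ i ∈ Icc 1 m, 3 ^ (-2 i)` of the Moran sets of the theorem. -/
noncomputable def scale (m : ℕ) : ℝ := ((3 : ℝ) ^ (m * (m + 1)))⁻¹

theorem scale_pos (m : ℕ) : 0 < scale m := by unfold scale; positivity

theorem logb_scale (m : ℕ) : Real.logb 3 (scale m) = -(m * (m + 1) : ℝ) := by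
  rw [scale, Real.logb_inv, Real.logb_pow, Real.logb_self_eq_one (by norm_num)]
  push_cast
  ring

theorem scale_strictAnti : StrictAnti scale := fun _ _ h =>
  inv_strictAnti₀ (by positivity) (pow_lt_pow_right₀ (by norm_num) (Nat.mul_lt_mul'' h (by omega)))

theorem exists_scale_le_lt {ε : ℝ} (h0 : 0 < ε) (h1 : ε < 1) :
    ∃ m, scale (m + 1) ≤ ε ∧ ε < scale m := by
  have hex : ∃ m, scale (m + 1) ≤ ε := by
    obtain ⟨m, hm⟩ := exists_pow_lt_of_lt_one h0 (by norm_num : (3⁻¹ : ℝ) < 1)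
    refine ⟨m, le_of_lt (lt_of_le_of_lt ?_ hm)⟩
    rw [scale, inv_pow]
    exact inv_anti₀ (by positivity) (pow_le_pow_right₀ (by norm_num) (by nlinarith))
  refine ⟨Nat.find hex, Nat.find_spec hex, ?_⟩
  cases h : Nat.find hex with
  | zero => simpa [scale] using h1
  | succ m => exact not_le.1 (Nat.find_min hex (by omega : m < Nat.find hex))

theorem mul_succ_add_two_mul_sum_Ioc {k l : ℕ} (hkl : k ≤ l) :
    k * (k + 1) + 2 * ∑ i ∈ Finset.Ioc k l, i = l * (l + 1) := by
  induction l, hkl using Nat.le_induction with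
  | base => simp
  | succ l hkl ih =>
    rw [Finset.sum_Ioc_succ_top hkl]
    linarith

theorem scale_div_scale {k l : ℕ} (hkl : k ≤ l) :
    scale k / scale l = 3 ^ (2 * ∑ i ∈ Finset.Ioc k l, i) := by
  rw [scale, scale, inv_div_inv, ← mul_succ_add_two_mul_sum_Ioc hkl, pow_add,
    mul_div_cancel_left₀ _ (by positivity)]

theorem scale_lt_scale_rpow {δ : ℝ} (hδ : 0 < δ) {l : ℕ} (hl : 0 < l) :
    scale l < scale l ^ (1 - δ) := by
  have hl1 : scale l < 1 := by simpa [scale] using scale_strictAnti hl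
  simpa using Real.rpow_lt_rpow_of_exponent_gt (scale_pos l) hl1 (by linarith : 1 - δ < 1)

theorem scale_rpow_le_scale {δ : ℝ} {k l : ℕ}
    (h : (k * (k + 1) : ℝ) ≤ (1 - δ) * (l * (l + 1))) : scale l ^ (1 - δ) ≤ scale k := by
  rw [← Real.logb_le_logb (b := 3) (by norm_num) (Real.rpow_pos_of_pos (scale_pos l) _)
    (scale_pos _), Real.logb_rpow_eq_mul_logb_of_pos (scale_pos l), logb_scale, logb_scale]
  linarith

theorem le_logb_div_of_scale {δ r R : ℝ} {k l : ℕ} (hδ : 0 ≤ δ) (hr : 0 < r)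
    (hkR : scale (k + 1) ≤ R) (hrl : r < scale l) (hδR : r ^ (1 - δ) ≤ R) :
    (l * (l + 1) - (k + 1) * (k + 2) : ℝ) ≤ Real.logb 3 (R / r) ∧
      δ * (l * (l + 1)) ≤ Real.logb 3 (R / r) := by
  have hR : 0 < R := (scale_pos _).trans_le hkR
  have hlogR := Real.logb_le_logb_of_le (b := 3) (by norm_num) (scale_pos _) hkR
  have hlogr := Real.logb_lt_logb (b := 3) (by norm_num) hr hrl
  have hlogδ := Real.logb_le_logb_of_le (b := 3) (by norm_num) (Real.rpow_pos_of_pos hr _) hδR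
  rw [logb_scale] at hlogR hlogr
  rw [Real.logb_rpow_eq_mul_logb_of_pos hr] at hlogδ
  rw [Real.logb_div hR.ne' hr.ne']
  push_cast at hlogR
  have := mul_le_mul_of_nonneg_left hlogr.le hδ
  constructor <;> linarith

section ScaleBounds

variable {X : Type*} [MetricSpace X]

theorem coverNum_le_three_pow (hup : ∀ k l : ℕ, ∀ r R : ℝ, k ≤ l → scale l ≤ r → 0 ≤ R →
      (coverNum X r R : ℝ) ≤ 3 ^ (∑ i ∈ Finset.Ioc k l, i) * (2 * R / scale k + 2))
    {k l : ℕ} {r R : ℝ} (hkl : k ≤ l) (hr : scale (l + 1) ≤ r) (hR : 0 ≤ R) (hRk : R < scale k) :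
    (coverNum X r R : ℝ) ≤ 3 ^ (∑ i ∈ Finset.Ioc (k + 1) (l + 1), i + 2 * k + 4) := by
  have hscale : scale k = 3 ^ (2 * k + 2) * scale (k + 1) := by
    rw [scale, scale, show (k + 1) * (k + 1 + 1) = (2 * k + 2) + k * (k + 1) by ring,
      pow_add (3 : ℝ) (2 * k + 2), mul_inv, mul_inv_cancel_left₀ (by positivity)]
  have h2R : 2 * R / scale (k + 1) ≤ 2 * 3 ^ (2 * k + 2) := by
    rw [div_le_iff₀ (scale_pos _)]
    linarith
  have h1 : (1 : ℝ) ≤ 3 ^ (2 * k + 2) := one_le_pow₀ (by norm_num)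
  calc (coverNum X r R : ℝ)
      ≤ 3 ^ (∑ i ∈ Finset.Ioc (k + 1) (l + 1), i) * (2 * R / scale (k + 1) + 2) :=
        hup _ _ _ _ (by omega) hr hR
    _ ≤ 3 ^ (∑ i ∈ Finset.Ioc (k + 1) (l + 1), i) * (9 * 3 ^ (2 * k + 2)) := by
        gcongr
        linarith
    _ = 3 ^ (∑ i ∈ Finset.Ioc (k + 1) (l + 1), i + 2 * k + 4) := by ring

theorem hasCoverBound_of_coverNum_le (hup : ∀ k l : ℕ, ∀ r R : ℝ, k ≤ l → scale l ≤ r → 0 ≤ R →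
      (coverNum X r R : ℝ) ≤ 3 ^ (∑ i ∈ Finset.Ioc k l, i) * (2 * R / scale k + 2))
    {δ α : ℝ} (hδ : 0 < δ) (hα : 1 / 2 < α) : HasCoverBound X δ α := by
  set β := δ * (α - 1 / 2) with hβdef
  have hβ : 0 < β := mul_pos hδ (by linarith)
  refine ⟨1, 3 ^ (9 / (4 * β) + 5), one_pos, by positivity, fun r R hr hrδ hδR hR1 => ?_⟩
  have hr1 : r < 1 := by
    by_contra! h
    have := Real.rpow_le_rpow_of_exponent_le h (by linarith : 1 - δ ≤ 1)
    rw [Real.rpow_one] at this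
    linarith
  have hR : 0 < R := (Real.rpow_pos_of_pos hr _).trans_le hδR
  obtain ⟨k, hkR, hRk⟩ := exists_scale_le_lt hR hR1
  obtain ⟨l, hlr, hrl⟩ := exists_scale_le_lt hr hr1
  have hkl : k ≤ l := Nat.lt_succ_iff.1
    (scale_strictAnti.lt_iff_gt.1 (hlr.trans_lt ((hrδ.trans_le hδR).trans hRk)))
  set S := ∑ i ∈ Finset.Ioc (k + 1) (l + 1), i
  have hS : ((k + 1) * (k + 2) + 2 * S : ℝ) = (l + 1) * (l + 2) := by
    exact_mod_cast mul_succ_add_two_mul_sum_Ioc (by omega : k + 1 ≤ l + 1)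
  set u := Real.logb 3 (R / r)
  obtain ⟨hu, hδu⟩ := le_logb_div_of_scale hδ.le hr hkR hrl hδR
  have hexp : ((S + 2 * k + 4 : ℕ) : ℝ) ≤ 9 / (4 * β) + 5 + α * u := by
    have hl : (k : ℝ) ≤ l := by exact_mod_cast hkl
    have hβu : β * (l * (l + 1)) ≤ (α - 1 / 2) * u := by
      rw [hβdef, mul_comm δ, mul_assoc]
      exact mul_le_mul_of_nonneg_left hδu (by linarith)
    -- `β x² - 3x + 9 / (4β) = β (x - 3 / (2β))²`
    have hquad : 3 * (l : ℝ) ≤ 9 / (4 * β) + β * (l * (l + 1)) := by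
      have : 0 ≤ (2 * β * l - 3) ^ 2 / (4 * β) + β * l := by positivity
      have h4β : (2 * β * l - 3) ^ 2 / (4 * β) = β * l ^ 2 - 3 * l + 9 / (4 * β) := by
        field_simp
        ring
      nlinarith
    push_cast
    linarith
  calc (coverNum X r R : ℝ) ≤ 3 ^ (S + 2 * k + 4) := coverNum_le_three_pow hup hkl hlr hR.le hRk
    _ = 3 ^ ((S + 2 * k + 4 : ℕ) : ℝ) := (Real.rpow_natCast _ _).symm
    _ ≤ 3 ^ (9 / (4 * β) + 5 + α * u) := Real.rpow_le_rpow_of_exponent_le (by norm_num) hexp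
    _ = 3 ^ (9 / (4 * β) + 5) * (R / r) ^ α := by
        rw [Real.rpow_add (by norm_num), mul_comm α, Real.rpow_mul (by norm_num),
          Real.rpow_logb (by norm_num) (by norm_num) (div_pos hR hr)]

theorem half_le_of_hasCoverBound
    (hlow : ∀ k l : ℕ, k ≤ l → (3 : ℝ) ^ (∑ i ∈ Finset.Ioc k l, i) ≤
      4 * coverNum X (scale l) (scale k))
    {δ α : ℝ} (hδ0 : 0 < δ) (hδ1 : δ < 1) (h : HasCoverBound X δ α) : 1 / 2 ≤ α := by
  obtain ⟨b, c, hb, hc, hbound⟩ := h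
  obtain ⟨k, hk, -⟩ := exists_scale_le_lt (lt_min (half_pos hb) one_half_pos)
    ((min_le_right _ _).trans_lt one_half_lt_one)
  have hkb : scale (k + 1) < b := hk.trans_lt ((min_le_left _ _).trans_lt (half_lt_self hb))
  have hev : ∀ᶠ l in atTop, (3 : ℝ) ^ (∑ i ∈ Finset.Ioc (k + 1) l, i) ≤
      4 * c * ((3 : ℝ) ^ (∑ i ∈ Finset.Ioc (k + 1) l, i)) ^ (2 * α) := by
    filter_upwards [eventually_ge_atTop (k + 2),
      eventually_ge_atTop ⌈((k + 1) * (k + 2) : ℝ) / (1 - δ)⌉₊] with l hkl hl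
    have hle : scale l ^ (1 - δ) ≤ scale (k + 1) := by
      refine scale_rpow_le_scale ?_
      have := Nat.ceil_le.1 hl
      rw [div_le_iff₀ (by linarith)] at this
      have hl0 : (0 : ℝ) ≤ (1 - δ) * l * l := by
        have : (0 : ℝ) ≤ 1 - δ := by linarith
        positivity
      push_cast
      nlinarith
    have hcover := hbound _ _ (scale_pos l) (scale_lt_scale_rpow hδ0 (by omega)) hle hkb
    rw [scale_div_scale (by omega)] at hcover
    calc (3 : ℝ) ^ (∑ i ∈ Finset.Ioc (k + 1) l, i) ≤ 4 * coverNum X (scale l) (scale (k + 1)) :=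
          hlow _ _ (by omega)
      _ ≤ 4 * (c * ((3 : ℝ) ^ (2 * ∑ i ∈ Finset.Ioc (k + 1) l, i)) ^ α) := by gcongr
      _ = _ := by
          rw [pow_mul', ← Real.rpow_natCast _ 2, ← Real.rpow_mul (by positivity)]
          push_cast
          ring
  have hsum : Tendsto (fun l => ∑ i ∈ Finset.Ioc (k + 1) l, i) atTop atTop :=
    tendsto_atTop_mono (fun l => by
      simpa using Finset.card_nsmul_le_sum (Finset.Ioc (k + 1) l) id 1
        fun i hi => by simp at hi ⊢; omega) (tendsto_sub_atTop_nat (k + 1))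
  have := one_le_of_eventually_le_mul_rpow
    ((tendsto_pow_atTop_atTop_of_one_lt (by norm_num : (1 : ℝ) < 3)).comp hsum) hev
  linarith

theorem dimqA_eq_half (hup : ∀ k l : ℕ, ∀ r R : ℝ, k ≤ l → scale l ≤ r → 0 ≤ R →
      (coverNum X r R : ℝ) ≤ 3 ^ (∑ i ∈ Finset.Ioc k l, i) * (2 * R / scale k + 2))
    (hlow : ∀ k l : ℕ, k ≤ l → (3 : ℝ) ^ (∑ i ∈ Finset.Ioc k l, i) ≤
      4 * coverNum X (scale l) (scale k)) :
    dimqA X = 1 / 2 := by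
  have himage : hFun X '' Ioo 0 1 = {1 / 2} := by
    rw [← (nonempty_Ioo.2 (zero_lt_one' ℝ)).image_const (1 / 2 : ℝ)]
    exact Set.image_congr fun δ hδ => hFun_eq_of_forall (by norm_num)
      (fun α hα => hasCoverBound_of_coverNum_le hup hδ.1 hα)
      fun α hα => half_le_of_hasCoverBound hlow hδ.1 hδ.2 hα
  rw [dimqA, himage, csSup_singleton]

end ScaleBounds

theorem moranLength_eq_scale {a b : List ℕ → ℝ} (h : b [] - a [] = 1) (m : ℕ) :
    moranLength (fun k => ((3 : ℝ) ^ (2 * k))⁻¹) a b m = scale m := by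
  induction m with
  | zero => simp [moranLength, scale, h]
  | succ m ih =>
    rw [moranLength] at ih ⊢
    rw [Finset.prod_range_succ, ← mul_assoc, ih, scale, scale, ← mul_inv, ← pow_add]
    ring_nf

/-- For `n_k = 3^k` and `c_k = 3^(-2k)`, every Moran set `K ∈ M([0,1], {n_k}, {c_k})`
satisfies `dim_qA K = 1/2`. -/
theorem dimqA_uniformCantor_example (K : Set ℝ)
    (hK : IsMoranSet (Set.Icc (0 : ℝ) 1) (fun k => 3 ^ k)
      (fun k => ((3 : ℝ) ^ (2 * k))⁻¹) K) :
    dimqA K = 1 / 2 := by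
  obtain ⟨a, b, hJ, hM⟩ := hK.exists_isMoranConstruction
  obtain ⟨ha, hb⟩ := (Icc_eq_Icc_iff zero_le_one).1 hJ
  have hlen := moranLength_eq_scale (a := a) (b := b) (by rw [← ha, ← hb]; norm_num)
  have hn : ∀ i, 0 < 3 ^ i := fun i => by positivity
  refine dimqA_eq_half (fun k l r R hkl hr hR => ?_) fun k l hkl => ?_
  · have := hM.coverNum_le hn hkl (hlen l ▸ hr) hR
    rw [hlen, Finset.prod_pow_eq_pow_sum] at this
    exact_mod_cast this
  · have := hM.prod_le_four_mul_coverNum hn hkl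
    rw [hlen, hlen, Finset.prod_pow_eq_pow_sum] at this
    exact_mod_cast this
end
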